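/- For α ∈ [1/2, 1] and almost every irrational x ∈ (0,1), writing (x̄_k, ȳ_k) = 𝐓_α^k(x_0, y_0) for k ≥ 1: θ̄_k = 1/(x̄_k − ȳ_k), and θ̄_{k+1} = −x̄_k ȳ_k/(x̄_k − ȳ_k) if (x̄_k, ȳ_k) ∉ Ω_α^−, while θ̄_{k+1} = (1 − x̄_k)(1 − ȳ_k)/(x̄_k − ȳ_k) if (x̄_k, ȳ_k) ∈ Ω_α^−; that is, 𝐅(𝐓_α^k(x_0, y_0)) = (θ̄_k, θ̄_{k+1}). -/

import Mathlib

open Real MeasureTheory Filter Set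
open scoped Classical

noncomputable section

/-- The Gauss map `T x = 1/x - ⌊1/x⌋`. -/
def gaussMap (x : ℝ) : ℝ := 1/x - ⌊1/x⌋

/-- The natural extension `𝐓(x,y) = (1/x - ⌊1/x⌋, 1/y - ⌊1/x⌋)`. -/
def natExt (p : ℝ × ℝ) : ℝ × ℝ := (1/p.1 - ⌊1/p.1⌋, 1/p.2 - ⌊1/p.1⌋)

/-- `(x₀, y₀) = 𝐓(x, ∞) = (1/x - ⌊1/x⌋, -⌊1/x⌋)`. -/
def initPt (x : ℝ) : ℝ × ℝ := (1/x - ⌊1/x⌋, -(⌊1/x⌋ : ℝ))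

/-- Partial quotient `a_n = ⌊1 / T^{n-1} x⌋` (indexed from 1). -/
def cfA (x : ℝ) (n : ℕ) : ℤ := ⌊1 / (gaussMap^[n-1] x)⌋

/-- The pair `(p_n, q_n)` of numerator and denominator of the `n`-th convergent. -/
def pq (x : ℝ) : ℕ → ℤ × ℤ
  | 0 => (0, 1)
  | 1 => (1, ⌊1/x⌋)
  | n+2 => (cfA x (n+2) * (pq x (n+1)).1 + (pq x n).1,
            cfA x (n+2) * (pq x (n+1)).2 + (pq x n).2)

def pconv (x : ℝ) (n : ℕ) : ℤ := (pq x n).1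
def qconv (x : ℝ) (n : ℕ) : ℤ := (pq x n).2

/-- `θ_n(x) = q_n |q_n x - p_n|`. -/
def theta (x : ℝ) (n : ℕ) : ℝ := (qconv x n : ℝ) * |(qconv x n : ℝ) * x - (pconv x n : ℝ)|

/-- `Ω = (0,1) × (-∞,-1)`. -/
def Ωset : Set (ℝ × ℝ) := Set.Ioo (0:ℝ) 1 ×ˢ Set.Iio (-1 : ℝ)

/-- `Ω_α = {(x,y) ∈ Ω : 1/(x-y) < α}`. -/
def Ωα (α : ℝ) : Set (ℝ × ℝ) := {p ∈ Ωset | 1 / (p.1 - p.2) < α}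

/-- First return time to `Ω_α` (defined as `sInf`, so `0` when undefined). -/
def tauα (α : ℝ) (p : ℝ × ℝ) : ℕ := sInf {n : ℕ | 1 ≤ n ∧ natExt^[n] p ∈ Ωα α}

/-- First return map `𝐓_α`. -/
def retMap (α : ℝ) (p : ℝ × ℝ) : ℝ × ℝ := natExt^[tauα α p] p

/-- The invariant measure `μ` with density `(log 2)⁻¹ (x-y)⁻²` on `Ω`. -/
def μnat : Measure (ℝ × ℝ) :=
  (volume.restrict Ωset).withDensity
    (fun p => ENNReal.ofReal ((Real.log 2)⁻¹ * ((p.1 - p.2)⁻¹)^2))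

/-- `c_α = (log 2 · μ(Ω_α))⁻¹`, explicitly. -/
def cα (α : ℝ) : ℝ := if 1/2 < α then (1 - α + Real.log 2 + Real.log α)⁻¹ else α⁻¹

/-- The probability measure `μ_α` with density `c_α (x-y)⁻²` on `Ω_α`. -/
def μmeas (α : ℝ) : Measure (ℝ × ℝ) :=
  (volume.restrict (Ωα α)).withDensity
    (fun p => ENNReal.ofReal (cα α * ((p.1 - p.2)⁻¹)^2))

/-- `Ω_α⁻ = {(x,y) ∈ Ω : α < x, y < αx/(α-x)}`. -/
def Ωminus (α : ℝ) : Set (ℝ × ℝ) := {p ∈ Ωset | α < p.1 ∧ p.2 < α * p.1 / (α - p.1)}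


/-!
Along the orbit of `(x₀, y₀)` one has `𝐓ⁿ(x₀, y₀) = (Tⁿ⁺¹x, -q_{n+1}/q_n)`, and the identity
`|q_n x - p_n| = 1 / (q_{n+1} + q_n Tⁿ⁺¹x)` turns `1/(x - y)`, `F⁺` and (when `a_{n+2} = 1`) `F⁻`
at this point into `θ_n`, `θ_{n+1}` and `θ_{n+2}`. So `𝐓ⁿ(x₀, y₀) ∈ Ω_α` exactly when `θ_n < α`,
and the iterates of `𝐓_α` run through the indices `n_k`. As `θ_n + θ_{n+1} < 1 ≤ 2α`, the index
after `n_k = n` is `n + 1` if `θ_{n+1} < α` and `n + 2` otherwise. On `Ω`, `F⁺ > α` is exactly the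
condition defining `Ω_α⁻`, where moreover `Tⁿ⁺¹x > α ≥ 1/2` forces `a_{n+2} = 1`. The exceptional
set consists of the countably many `x` with some `θ_n = α`.
-/

section GaussMap

variable {x : ℝ}

theorem irrational_gaussMap (h : Irrational x) : Irrational (gaussMap x) :=
  (one_div x ▸ h.inv).sub_intCast _

theorem gaussMap_mem_Ioo (h : Irrational x) : gaussMap x ∈ Ioo (0:ℝ) 1 := by
  refine ⟨(Int.fract_nonneg (1/x)).lt_of_ne fun h0 => irrational_gaussMap h ⟨0, ?_⟩,
    Int.fract_lt_one _⟩
  rw [Rat.cast_zero]; exact h0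

theorem irrational_gaussMap_iterate (h : Irrational x) (n : ℕ) :
    Irrational (gaussMap^[n] x) := by
  induction n with
  | zero => exact h
  | succ n ih => rw [Function.iterate_succ_apply']; exact irrational_gaussMap ih

theorem gaussMap_iterate_mem_Ioo (hx : x ∈ Ioo (0:ℝ) 1) (hirr : Irrational x) :
    ∀ n, gaussMap^[n] x ∈ Ioo (0:ℝ) 1
  | 0 => hx
  | n + 1 => by
    rw [Function.iterate_succ_apply']; exact gaussMap_mem_Ioo (irrational_gaussMap_iterate hirr n)

theorem gaussMap_iterate_succ (x : ℝ) (n : ℕ) :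
    gaussMap^[n+1] x = 1 / gaussMap^[n] x - cfA x (n+1) := by
  rw [Function.iterate_succ_apply']
  simp only [gaussMap, cfA, Nat.add_sub_cancel]

theorem one_le_cfA (hx : x ∈ Ioo (0:ℝ) 1) (hirr : Irrational x) (n : ℕ) :
    1 ≤ cfA x (n+1) := by
  obtain ⟨h0, h1⟩ := gaussMap_iterate_mem_Ioo hx hirr n
  simp only [cfA, Nat.add_sub_cancel, Int.le_floor, Int.cast_one]
  rw [le_div_iff₀ h0]; linarith

theorem cfA_eq_one_of_half_lt {n : ℕ} (h : 1/2 < gaussMap^[n] x) (h1 : gaussMap^[n] x < 1) :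
    cfA x (n+1) = 1 := by
  have h0 : 0 < gaussMap^[n] x := by linarith
  simp only [cfA, Nat.add_sub_cancel, Int.floor_eq_iff, Int.cast_one]
  constructor
  · rw [le_div_iff₀ h0]; linarith
  · rw [div_lt_iff₀ h0]; linarith

end GaussMap

section Convergents

variable {x : ℝ}

theorem pconv_add_two (n : ℕ) : pconv x (n+2) = cfA x (n+2) * pconv x (n+1) + pconv x n := rfl

theorem qconv_add_two (n : ℕ) : qconv x (n+2) = cfA x (n+2) * qconv x (n+1) + qconv x n := rfl

theorem qconv_pos (hx : x ∈ Ioo (0:ℝ) 1) (hirr : Irrational x) : ∀ n, 0 < qconv x n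
  | 0 => Int.one_pos
  | 1 => Int.one_pos.trans_le (one_le_cfA hx hirr 0)
  | n + 2 => by
    have := one_le_cfA hx hirr (n+1)
    have := qconv_pos hx hirr n
    have := qconv_pos hx hirr (n+1)
    rw [qconv_add_two]; positivity

theorem qconv_lt_qconv_succ (hx : x ∈ Ioo (0:ℝ) 1) (hirr : Irrational x) {n : ℕ}
    (hn : 1 ≤ n) : qconv x n < qconv x (n+1) := by
  obtain ⟨n, rfl⟩ := Nat.exists_eq_add_of_le' hn
  have := one_le_cfA hx hirr (n+1)
  have := qconv_pos hx hirr n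
  have := qconv_pos hx hirr (n+1)
  rw [qconv_add_two]; nlinarith

theorem pconv_mul_qconv_sub (n : ℕ) :
    pconv x (n+1) * qconv x n - pconv x n * qconv x (n+1) = (-1)^n := by
  induction n with
  | zero => simp [pconv, qconv, pq]
  | succ n ih =>
    rw [pconv_add_two, qconv_add_two, pow_succ]
    linear_combination (-1 : ℤ) * ih

def convErr (x : ℝ) (n : ℕ) : ℝ := (qconv x n : ℝ) * x - (pconv x n : ℝ)

def convDenom (x : ℝ) (n : ℕ) : ℝ :=
  (qconv x (n+1) : ℝ) + (qconv x n : ℝ) * gaussMap^[n+1] x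

theorem theta_eq_qconv_mul_abs (n : ℕ) : theta x n = (qconv x n : ℝ) * |convErr x n| := rfl

theorem convErr_succ (hx : x ∈ Ioo (0:ℝ) 1) (hirr : Irrational x) (n : ℕ) :
    convErr x (n+1) = -(gaussMap^[n+1] x) * convErr x n := by
  induction n with
  | zero =>
    have hx0 : x ≠ 0 := hx.1.ne'
    rw [zero_add, Function.iterate_one]
    simp only [convErr, pconv, qconv, pq, gaussMap]
    push_cast
    field_simp
    ring
  | succ n ih =>
    have hne : gaussMap^[n+1] x ≠ 0 := (gaussMap_iterate_mem_Ioo hx hirr (n+1)).1.ne'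
    have hrec : convErr x (n+2) = (cfA x (n+2) : ℝ) * convErr x (n+1) + convErr x n := by
      simp only [convErr, pconv_add_two, qconv_add_two]; push_cast; ring
    rw [hrec, gaussMap_iterate_succ x (n+1), ih]
    field_simp
    ring

theorem convErr_mul_convDenom (hx : x ∈ Ioo (0:ℝ) 1) (hirr : Irrational x) (n : ℕ) :
    convErr x n * convDenom x n = (-1)^n := by
  have hdet : (pconv x (n+1) : ℝ) * qconv x n - pconv x n * qconv x (n+1) = (-1)^n := by
    exact_mod_cast pconv_mul_qconv_sub n
  have hrec := convErr_succ hx hirr n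
  simp only [convErr, convDenom] at hrec ⊢
  linear_combination (qconv x n : ℝ) * hrec + hdet

theorem convDenom_pos (hx : x ∈ Ioo (0:ℝ) 1) (hirr : Irrational x) (n : ℕ) :
    0 < convDenom x n := by
  have h1 : (0:ℝ) < qconv x (n+1) := by exact_mod_cast qconv_pos hx hirr (n+1)
  have h2 : (0:ℝ) < qconv x n := by exact_mod_cast qconv_pos hx hirr n
  have h3 := (gaussMap_iterate_mem_Ioo hx hirr (n+1)).1
  unfold convDenom; positivity

theorem abs_convErr (hx : x ∈ Ioo (0:ℝ) 1) (hirr : Irrational x) (n : ℕ) :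
    |convErr x n| = 1 / convDenom x n := by
  have h := congrArg abs (convErr_mul_convDenom hx hirr n)
  rw [abs_mul, abs_of_pos (convDenom_pos hx hirr n), abs_pow, abs_neg, abs_one, one_pow] at h
  rw [eq_div_iff (convDenom_pos hx hirr n).ne', h]

theorem theta_eq_div (hx : x ∈ Ioo (0:ℝ) 1) (hirr : Irrational x) (n : ℕ) :
    theta x n = (qconv x n : ℝ) / convDenom x n := by
  rw [theta_eq_qconv_mul_abs, abs_convErr hx hirr n, mul_one_div]

theorem theta_succ_eq_div (hx : x ∈ Ioo (0:ℝ) 1) (hirr : Irrational x) (n : ℕ) :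
    theta x (n+1) = (qconv x (n+1) : ℝ) * gaussMap^[n+1] x / convDenom x n := by
  rw [theta_eq_qconv_mul_abs, convErr_succ hx hirr n, abs_mul, abs_neg,
    abs_of_pos (gaussMap_iterate_mem_Ioo hx hirr (n+1)).1, abs_convErr hx hirr n]
  ring

theorem theta_add_two_eq_div (hx : x ∈ Ioo (0:ℝ) 1) (hirr : Irrational x) {n : ℕ}
    (ha : cfA x (n+2) = 1) :
    theta x (n+2) =
      (1 - gaussMap^[n+1] x) * ((qconv x n : ℝ) + qconv x (n+1)) / convDenom x n := by
  have hx1 := (gaussMap_iterate_mem_Ioo hx hirr (n+1)).1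
  have hx2 := (gaussMap_iterate_mem_Ioo hx hirr (n+2)).1
  have hq : (qconv x (n+2) : ℝ) = qconv x (n+1) + qconv x n := by
    rw [qconv_add_two, ha]; push_cast; ring
  have hT : gaussMap^[n+2] x = 1 / gaussMap^[n+1] x - 1 := by
    rw [gaussMap_iterate_succ x (n+1), ha, Int.cast_one]
  rw [theta_eq_qconv_mul_abs, convErr_succ hx hirr (n+1), abs_mul, abs_neg, abs_of_pos hx2,
    convErr_succ hx hirr n, abs_mul, abs_neg, abs_of_pos hx1, abs_convErr hx hirr n, hq, hT]
  field_simp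
  ring

theorem theta_add_theta_succ_lt_one (hx : x ∈ Ioo (0:ℝ) 1) (hirr : Irrational x) {n : ℕ}
    (hn : 1 ≤ n) : theta x n + theta x (n+1) < 1 := by
  rw [theta_eq_div hx hirr n, theta_succ_eq_div hx hirr n, ← add_div,
    div_lt_one (convDenom_pos hx hirr n), convDenom]
  have hlt : (qconv x n : ℝ) < qconv x (n+1) := by exact_mod_cast qconv_lt_qconv_succ hx hirr hn
  obtain ⟨h0, h1⟩ := gaussMap_iterate_mem_Ioo hx hirr (n+1)
  nlinarith

theorem infinite_setOf_theta_lt (hx : x ∈ Ioo (0:ℝ) 1) (hirr : Irrational x) {α : ℝ}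
    (hα : 1/2 ≤ α) : {n : ℕ | 1 ≤ n ∧ theta x n < α}.Infinite := by
  refine Set.infinite_of_forall_exists_gt fun b => ?_
  by_cases h : theta x (b+1) < α
  · exact ⟨b+1, ⟨by omega, h⟩, by omega⟩
  · refine ⟨b+2, ⟨by omega, ?_⟩, by omega⟩
    linarith [theta_add_theta_succ_lt_one hx hirr (n := b+1) (by omega)]

end Convergents

section Orbit

variable {x : ℝ}

theorem natExt_iterate_initPt (hx : x ∈ Ioo (0:ℝ) 1) (hirr : Irrational x) (n : ℕ) :
    natExt^[n] (initPt x) = (gaussMap^[n+1] x, -((qconv x (n+1) : ℝ) / qconv x n)) := by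
  induction n with
  | zero =>
    simp [initPt, gaussMap, qconv, pq]
  | succ n ih =>
    have hq0 : (qconv x n : ℝ) ≠ 0 := by exact_mod_cast (qconv_pos hx hirr n).ne'
    have hq1 : (qconv x (n+1) : ℝ) ≠ 0 := by exact_mod_cast (qconv_pos hx hirr (n+1)).ne'
    rw [Function.iterate_succ_apply', ih, natExt, Prod.mk.injEq, gaussMap_iterate_succ x (n+1)]
    refine ⟨rfl, ?_⟩
    rw [qconv_add_two]
    push_cast
    rw [show ⌊1 / gaussMap^[n+1] x⌋ = cfA x (n+2) from rfl]
    field_simp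
    ring

theorem natExt_iterate_initPt_fst_sub_snd (hx : x ∈ Ioo (0:ℝ) 1) (hirr : Irrational x)
    (n : ℕ) :
    (natExt^[n] (initPt x)).1 - (natExt^[n] (initPt x)).2 = convDenom x n / qconv x n := by
  have hq0 : (qconv x n : ℝ) ≠ 0 := by exact_mod_cast (qconv_pos hx hirr n).ne'
  rw [natExt_iterate_initPt hx hirr n, convDenom]
  field_simp
  ring

theorem one_div_natExt_iterate_initPt (hx : x ∈ Ioo (0:ℝ) 1) (hirr : Irrational x) (n : ℕ) :
    1 / ((natExt^[n] (initPt x)).1 - (natExt^[n] (initPt x)).2) = theta x n := by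
  rw [natExt_iterate_initPt_fst_sub_snd hx hirr n, theta_eq_div hx hirr n, one_div_div]

theorem Fplus_natExt_iterate_initPt (hx : x ∈ Ioo (0:ℝ) 1) (hirr : Irrational x) (n : ℕ) :
    -(natExt^[n] (initPt x)).1 * (natExt^[n] (initPt x)).2
      / ((natExt^[n] (initPt x)).1 - (natExt^[n] (initPt x)).2) = theta x (n+1) := by
  have hq0 : (qconv x n : ℝ) ≠ 0 := by exact_mod_cast (qconv_pos hx hirr n).ne'
  have hD := (convDenom_pos hx hirr n).ne'
  rw [natExt_iterate_initPt_fst_sub_snd hx hirr n, theta_succ_eq_div hx hirr n]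
  rw [natExt_iterate_initPt hx hirr n]
  field_simp

theorem Fminus_natExt_iterate_initPt (hx : x ∈ Ioo (0:ℝ) 1) (hirr : Irrational x) {n : ℕ}
    (ha : cfA x (n+2) = 1) :
    (1 - (natExt^[n] (initPt x)).1) * (1 - (natExt^[n] (initPt x)).2)
      / ((natExt^[n] (initPt x)).1 - (natExt^[n] (initPt x)).2) = theta x (n+2) := by
  have hq0 : (qconv x n : ℝ) ≠ 0 := by exact_mod_cast (qconv_pos hx hirr n).ne'
  have hD := (convDenom_pos hx hirr n).ne'
  rw [natExt_iterate_initPt_fst_sub_snd hx hirr n, theta_add_two_eq_div hx hirr ha]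
  rw [natExt_iterate_initPt hx hirr n]
  field_simp
  ring

theorem natExt_iterate_initPt_mem_Ωset (hx : x ∈ Ioo (0:ℝ) 1) (hirr : Irrational x) {n : ℕ}
    (hn : 1 ≤ n) : natExt^[n] (initPt x) ∈ Ωset := by
  have hq0 : (0:ℝ) < qconv x n := by exact_mod_cast qconv_pos hx hirr n
  have hlt : (qconv x n : ℝ) < qconv x (n+1) := by exact_mod_cast qconv_lt_qconv_succ hx hirr hn
  rw [natExt_iterate_initPt hx hirr n]
  refine ⟨gaussMap_iterate_mem_Ioo hx hirr (n+1), ?_⟩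
  rw [mem_Iio, neg_lt_neg_iff, lt_div_iff₀ hq0]
  linarith

theorem natExt_iterate_initPt_mem_Ωα_iff (hx : x ∈ Ioo (0:ℝ) 1) (hirr : Irrational x)
    (α : ℝ) {n : ℕ} (hn : 1 ≤ n) : natExt^[n] (initPt x) ∈ Ωα α ↔ theta x n < α := by
  rw [Ωα, mem_ofPred_eq, one_div_natExt_iterate_initPt hx hirr n]
  exact and_iff_right (natExt_iterate_initPt_mem_Ωset hx hirr hn)

end Orbit

theorem lt_Fplus_iff_mem_Ωminus {α : ℝ} (hα : 0 < α) {p : ℝ × ℝ} (hp : p ∈ Ωset) :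
    α < -p.1 * p.2 / (p.1 - p.2) ↔ p ∈ Ωminus α := by
  obtain ⟨⟨hx0, hx1⟩, hy⟩ := hp
  rw [mem_Iio] at hy
  rw [lt_div_iff₀ (by linarith), Ωminus, mem_ofPred_eq, and_iff_right ⟨⟨hx0, hx1⟩, hy⟩]
  constructor
  · intro h
    have hαx : α < p.1 := by
      by_contra! hle
      nlinarith
    refine ⟨hαx, ?_⟩
    rw [lt_div_iff_of_neg (by linarith)]
    linarith
  · rintro ⟨hαx, h⟩
    rw [lt_div_iff_of_neg (by linarith)] at h
    linarith

section FirstReturn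

variable {X : Type*} (f : X → X) (S : Set X)

theorem sInf_returnTimes_iterate {z : X} {n m : ℕ} (hnm : n < m) (hm : f^[m] z ∈ S)
    (hgap : ∀ j, n < j → j < m → f^[j] z ∉ S) :
    sInf {t | 1 ≤ t ∧ f^[t] (f^[n] z) ∈ S} = m - n := by
  simp only [← Function.iterate_add_apply]
  refine le_antisymm (Nat.sInf_le ⟨by omega, by rwa [Nat.sub_add_cancel hnm.le]⟩) ?_
  refine le_csInf ⟨m - n, by omega, by rwa [Nat.sub_add_cancel hnm.le]⟩ ?_
  rintro t ⟨ht, htS⟩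
  by_contra! hlt
  exact hgap (t + n) (by omega) (by omega) htS

theorem iterate_firstReturn_eq_iterate_nth {z : X}
    (hinf : {n | 1 ≤ n ∧ f^[n] z ∈ S}.Infinite) (k : ℕ) :
    (fun p => f^[sInf {n | 1 ≤ n ∧ f^[n] p ∈ S}] p)^[k+1] z
      = f^[Nat.nth (fun n => 1 ≤ n ∧ f^[n] z ∈ S) k] z := by
  induction k with
  | zero =>
    have hm := Nat.nth_mem_of_infinite hinf 0
    have hτ := sInf_returnTimes_iterate f S (z := z) (n := 0) (by omega) hm.2
      fun j hj hjm hjS => by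
      have : Nat.nth (fun n => 1 ≤ n ∧ f^[n] z ∈ S) 0 ≤ j := by
        rw [Nat.nth_zero]; exact Nat.sInf_le ⟨hj, hjS⟩
      omega
    rw [Function.iterate_zero_apply, Nat.sub_zero] at hτ
    rw [Function.iterate_one, hτ]
  | succ k ih =>
    have hm := Nat.nth_mem_of_infinite hinf (k+1)
    have hlt := (Nat.nth_lt_nth hinf).2 (Nat.lt_succ_self k)
    rw [Function.iterate_succ_apply', ih, sInf_returnTimes_iterate f S hlt hm.2,
      ← Function.iterate_add_apply, Nat.sub_add_cancel hlt.le]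
    intro j hj hjm hjS
    have := Nat.le_nth_of_lt_nth_succ hjm ⟨by omega, hjS⟩
    omega

end FirstReturn

theorem retMap_iterate_initPt {x : ℝ} (hx : x ∈ Ioo (0:ℝ) 1) (hirr : Irrational x) {α : ℝ}
    (hα : 1/2 ≤ α) (k : ℕ) :
    (retMap α)^[k+1] (initPt x) =
      natExt^[Nat.nth (fun n => 1 ≤ n ∧ theta x n < α) k] (initPt x) := by
  have hS : (fun n => 1 ≤ n ∧ natExt^[n] (initPt x) ∈ Ωα α) = fun n => 1 ≤ n ∧ theta x n < α :=
    funext fun n => propext (and_congr_right (natExt_iterate_initPt_mem_Ωα_iff hx hirr α))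
  rw [← hS]
  exact iterate_firstReturn_eq_iterate_nth natExt (Ωα α)
    (hS ▸ infinite_setOf_theta_lt hx hirr hα) k

theorem nth_succ_eq_of_forall_not {p : ℕ → Prop} (hp : (Set.ofPred p).Infinite) {k m : ℕ}
    (hm : p m) (hlt : Nat.nth p k < m) (hgap : ∀ j, Nat.nth p k < j → j < m → ¬ p j) :
    Nat.nth p (k+1) = m := by
  rcases lt_trichotomy (Nat.nth p (k+1)) m with h | h | h
  · exact absurd (Nat.nth_mem_of_infinite hp (k+1))
      (hgap _ ((Nat.nth_lt_nth hp).2 (Nat.lt_succ_self k)) h)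
  · exact h
  · have := Nat.le_nth_of_lt_nth_succ h hm
    omega

theorem countable_setOf_mul_abs_sub_eq {α : ℝ} (hα : 0 < α) :
    {x : ℝ | ∃ p q : ℤ, 0 < q ∧ (q:ℝ) * |q * x - p| = α}.Countable := by
  refine (countable_iUnion fun pq : ℤ × ℤ => (({((pq.1:ℝ) + α / pq.2) / pq.2,
    ((pq.1:ℝ) - α / pq.2) / pq.2} : Set ℝ).toFinite.countable)).mono ?_
  rintro y ⟨p, q, hq, heq⟩
  refine mem_iUnion.2 ⟨(p, q), ?_⟩
  have hq0 : (0:ℝ) < q := by exact_mod_cast hq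
  have habs : |(q:ℝ) * y - p| = α / q := by rw [eq_div_iff hq0.ne']; linarith
  rcases (abs_eq (div_pos hα hq0).le).1 habs with h | h
  · left
    rw [eq_div_iff hq0.ne']; linarith
  · right
    rw [mem_singleton_iff, eq_div_iff hq0.ne']; linarith

section NextVisit

variable {x α : ℝ}

theorem theta_nth_succ_of_mem_Ωminus (hx : x ∈ Ioo (0:ℝ) 1) (hirr : Irrational x)
    (hα : 1/2 ≤ α) {k m : ℕ} (hk : Nat.nth (fun n => 1 ≤ n ∧ theta x n < α) k = m)
    (hmin : natExt^[m] (initPt x) ∈ Ωminus α) :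
    theta x (Nat.nth (fun n => 1 ≤ n ∧ theta x n < α) (k+1)) =
      (1 - (natExt^[m] (initPt x)).1) * (1 - (natExt^[m] (initPt x)).2)
        / ((natExt^[m] (initPt x)).1 - (natExt^[m] (initPt x)).2) := by
  have hinf := infinite_setOf_theta_lt hx hirr hα
  have hm1 : 1 ≤ m := hk ▸ (Nat.nth_mem_of_infinite hinf k).1
  have hgt : α < theta x (m+1) := Fplus_natExt_iterate_initPt hx hirr m ▸
    (lt_Fplus_iff_mem_Ωminus (by linarith) (natExt_iterate_initPt_mem_Ωset hx hirr hm1)).2 hmin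
  have hnext : theta x (m+2) < α := by
    linarith [theta_add_theta_succ_lt_one hx hirr (n := m+1) (by omega)]
  have ha : cfA x (m+2) = 1 := by
    have hαT := hmin.2.1
    rw [natExt_iterate_initPt hx hirr m] at hαT
    exact cfA_eq_one_of_half_lt (by linarith) (gaussMap_iterate_mem_Ioo hx hirr (m+1)).2
  rw [nth_succ_eq_of_forall_not hinf ⟨by omega, hnext⟩ (by omega) fun j hj hj' hjα => by
    obtain rfl : j = m + 1 := by omega
    exact hgt.not_gt hjα.2]
  exact (Fminus_natExt_iterate_initPt hx hirr ha).symm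

theorem theta_nth_succ_of_notMem_Ωminus (hx : x ∈ Ioo (0:ℝ) 1) (hirr : Irrational x)
    (hα : 1/2 ≤ α) (hθα : ∀ n, theta x n ≠ α) {k m : ℕ}
    (hk : Nat.nth (fun n => 1 ≤ n ∧ theta x n < α) k = m)
    (hmin : natExt^[m] (initPt x) ∉ Ωminus α) :
    theta x (Nat.nth (fun n => 1 ≤ n ∧ theta x n < α) (k+1)) =
      -(natExt^[m] (initPt x)).1 * (natExt^[m] (initPt x)).2
        / ((natExt^[m] (initPt x)).1 - (natExt^[m] (initPt x)).2) := by
  have hinf := infinite_setOf_theta_lt hx hirr hα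
  have hm1 : 1 ≤ m := hk ▸ (Nat.nth_mem_of_infinite hinf k).1
  have hFplus := Fplus_natExt_iterate_initPt hx hirr m
  have hle : theta x (m+1) ≤ α := not_lt.1 fun h => hmin <|
    (lt_Fplus_iff_mem_Ωminus (by linarith) (natExt_iterate_initPt_mem_Ωset hx hirr hm1)).1
      (hFplus ▸ h)
  rw [nth_succ_eq_of_forall_not hinf ⟨by omega, hle.lt_of_ne (hθα _)⟩ (by omega)
    fun j hj hj' => by omega]
  exact hFplus.symm

end NextVisit

/-- for `α ∈ [1/2,1]` and a.e. irrational `x ∈ (0,1)`, writing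
`(x̄_k, ȳ_k) = 𝐓_α^k(x₀,y₀)`: `θ̄_k = 1/(x̄_k - ȳ_k)` and `θ̄_{k+1} = F⁻(x̄_k,ȳ_k)` if
`(x̄_k,ȳ_k) ∈ Ω_α⁻`, `θ̄_{k+1} = F⁺(x̄_k,ȳ_k)` otherwise (here `Nat.nth P k = n_{k+1}` and
`(retMap α)^[k+1]` is the `(k+1)`-st iterate). -/
theorem stmt_15 (α : ℝ) (hα : α ∈ Set.Icc (1/2:ℝ) 1) :
    ∀ᵐ x : ℝ, x ∈ Set.Ioo (0:ℝ) 1 → Irrational x →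
      ∀ k : ℕ,
        theta x (Nat.nth (fun n => 1 ≤ n ∧ theta x n < α) k) =
          1 / (((retMap α)^[k+1] (initPt x)).1 - ((retMap α)^[k+1] (initPt x)).2) ∧
        theta x (Nat.nth (fun n => 1 ≤ n ∧ theta x n < α) (k+1)) =
          (if (retMap α)^[k+1] (initPt x) ∈ Ωminus α then
            (1 - ((retMap α)^[k+1] (initPt x)).1) * (1 - ((retMap α)^[k+1] (initPt x)).2) /
              (((retMap α)^[k+1] (initPt x)).1 - ((retMap α)^[k+1] (initPt x)).2)
           else
            -((retMap α)^[k+1] (initPt x)).1 * ((retMap α)^[k+1] (initPt x)).2 /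
              (((retMap α)^[k+1] (initPt x)).1 - ((retMap α)^[k+1] (initPt x)).2)) := by
  filter_upwards [(countable_setOf_mul_abs_sub_eq (by linarith [hα.1] : 0 < α)).ae_notMem volume]
    with x hxα hx hirr k
  have hθα : ∀ n, theta x n ≠ α := fun n h => hxα ⟨_, _, qconv_pos hx hirr n, h⟩
  rw [retMap_iterate_initPt hx hirr hα.1 k]
  refine ⟨(one_div_natExt_iterate_initPt hx hirr _).symm, ?_⟩
  split_ifs with hmin
  · exact theta_nth_succ_of_mem_Ωminus hx hirr hα.1 rfl hmin
  · exact theta_nth_succ_of_notMem_Ωminus hx hirr hα.1 hθα rfl hmin
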